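/- arXiv:math/0311111 — 2 statements merged into one kernel-verified Lean document; each statement's English description precedes it below -/
import Mathlib

section
/- Let F be a field, a, b, c ∈ F with appropriate nonvanishing. Define A(t) = (at−a+1)/a, B(t) = bt−t+1, k(t) = B(t)/(abt·A(t)), l(y) = 1 − k(c)/k(y). If y satisfies l(y) = 0 and y ≠ c, then y = −(ac−a+1)/(a(bc−c+1)) = −A(c)/B(c). Conversely, both y = c and y = −A(c)/B(c) satisfy l(y) = 0 (when defined). -/
/-!
Up to the constant factor `1 / b`, `k` is the rational function
`level a b t = B(t) / (t (a t - a + 1))`, and `l y = 0` says exactly that `k y = k c`.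
Clearing denominators, `level y = level c` becomes a quadratic equation in `y` with the known
root `y = c`; the cofactor is linear, `a B(c) y + (a c - a + 1)`, and its root is `-A(c) / B(c)`.
-/

section Level

variable {F : Type*} [Field F] {a b c y : F}

def level (a b t : F) : F := (b * t - t + 1) / (t * (a * t - a + 1))

theorem level_eq_level_iff (ha : a ≠ 0) (hBc : b * c - c + 1 ≠ 0)
    (hy : y * (a * y - a + 1) ≠ 0) (hc : c * (a * c - a + 1) ≠ 0) :
    level a b y = level a b c ↔ y = c ∨ y = -(a * c - a + 1) / (a * (b * c - c + 1)) := by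
  have factor : (b * y - y + 1) * (c * (a * c - a + 1)) - (b * c - c + 1) * (y * (a * y - a + 1))
      = -((y - c) * (a * (b * c - c + 1) * y + (a * c - a + 1))) := by ring
  rw [level, level, div_eq_div_iff hy hc, ← sub_eq_zero, factor, neg_eq_zero, mul_eq_zero,
    sub_eq_zero, eq_div_iff (mul_ne_zero ha hBc), add_eq_zero_iff_eq_neg, mul_comm]

end Level

theorem one_sub_div_eq_zero_iff {F : Type*} [DivisionRing F] {x z : F} (hx : x ≠ 0) :
    1 - x / z = 0 ↔ z = x := by
  rcases eq_or_ne z 0 with rfl | hz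
  · simp [hx.symm]
  · rw [sub_eq_zero, eq_comm, div_eq_one_iff_eq hz, eq_comm]

theorem stmt5_general {F : Type*} [Field F] (a b c : F) (A B k : F → F) (l : F → F)
    (hA : ∀ t, A t = (a * t - a + 1) / a)
    (hB : ∀ t, B t = b * t - t + 1)
    (hk : ∀ t, k t = B t / (a * b * t * A t))
    (hl : ∀ t, l t = 1 - k c / k t)
    (hb : b ≠ 0) (hc : c ≠ 0)
    (hAc : A c ≠ 0) (hBc : B c ≠ 0) :
    (∀ y, y ≠ 0 → A y ≠ 0 → B y ≠ 0 → l y = 0 → y ≠ c →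
        y = -(a * c - a + 1) / (a * (b * c - c + 1)) ∧ y = -A c / B c)
    ∧ l c = 0
    ∧ (-A c / B c ≠ 0 → A (-A c / B c) ≠ 0 → B (-A c / B c) ≠ 0 →
        l (-A c / B c) = 0) := by
  have ha : a ≠ 0 := by
    rintro rfl
    simp [hA] at hAc
  have hA_ne : ∀ t, A t ≠ 0 → a * t - a + 1 ≠ 0 := fun t ht => by simpa [hA, ha] using ht
  have hk_level : ∀ t, k t = level a b t / b := fun t => by
    rw [hk, hA, hB, level, div_div, mul_comm _ b]
    congr 1
    field_simp
  rw [hB] at hBc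
  have hc_den : c * (a * c - a + 1) ≠ 0 := mul_ne_zero hc (hA_ne c hAc)
  have hkc : k c ≠ 0 := by
    rw [hk_level]
    exact div_ne_zero (div_ne_zero hBc hc_den) hb
  have hl_zero : ∀ y, y ≠ 0 → A y ≠ 0 →
      (l y = 0 ↔ y = c ∨ y = -(a * c - a + 1) / (a * (b * c - c + 1))) := fun y hy hAy => by
    rw [hl, one_sub_div_eq_zero_iff hkc, hk_level, hk_level, div_left_inj' hb,
      level_eq_level_iff ha hBc (mul_ne_zero hy (hA_ne y hAy)) hc_den]
  have hroot : -A c / B c = -(a * c - a + 1) / (a * (b * c - c + 1)) := by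
    rw [hA, hB, neg_div, neg_div, div_div]
  refine ⟨fun y hy hAy _ hly hyc => ?_, ?_, fun hy hAy _ => (hl_zero _ hy hAy).2 (Or.inr hroot)⟩
  · have hy_root := ((hl_zero y hy hAy).1 hly).resolve_left hyc
    exact ⟨hy_root, hy_root.trans hroot.symm⟩
  · rw [hl, div_self hkc, sub_self]

theorem stmt5 {F : Type*} [Field F] (a b c : F) (A B k : F → F) (l : F → F)
    (hA : ∀ t, A t = (a * t - a + 1) / a)
    (hB : ∀ t, B t = b * t - t + 1)
    (hk : ∀ t, k t = B t / (a * b * t * A t))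
    (hl : ∀ t, l t = 1 - k c / k t)
    (ha : a ≠ 0) (hb : b ≠ 0) (hc : c ≠ 0)
    (hAc : A c ≠ 0) (hBc : B c ≠ 0) :
    (∀ y, y ≠ 0 → A y ≠ 0 → B y ≠ 0 → l y = 0 → y ≠ c →
        y = -(a * c - a + 1) / (a * (b * c - c + 1)) ∧ y = -A c / B c)
    ∧ l c = 0
    ∧ (-A c / B c ≠ 0 → A (-A c / B c) ≠ 0 → B (-A c / B c) ≠ 0 →
        l (-A c / B c) = 0) :=
  stmt5_general a b c A B k l hA hB hk hl hb hc hAc hBc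
end

section
/- Let F be a field, a, b, c ∈ F all nonzero with bc − c + 1 ≠ 0 and ac − a + 1 ≠ 0. Define l₁(y) = 1 − y/c and l₂(y) = (y₂ − y)/(y₂·B(y)) where y₂ = −(ac−a+1)/(a(bc−c+1)), B(y) = by−y+1, A(t) = (at−a+1)/a, k(t) = B(t)/(abt·A(t)), and l(y) = 1 − k(c)/k(y). Then for all y with y ≠ 0, A(y) ≠ 0, B(y) ≠ 0: l₁(y)·l₂(y) = l(y), and l₁(0) = l₂(0) = 1. -/
/-!
Put `P = ac − a + 1` and `Q = B(c)`. After clearing denominators, `l(y)` has numerator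
`c P B(y) − y Q (ay − a + 1)`, a quadratic in `y` with roots `c` and `y₂`, the zeros of `l₁`
and `l₂`; so both sides equal `(c − y)(P + aQy) / (c P B(y))`.
-/

section
variable {F : Type*} [Field F]

lemma sub_div_self_of_eq_neg_div {p q y₀ : F} (hy₀ : y₀ = -p / q) (hp : p ≠ 0) (hq : q ≠ 0)
    (y : F) : (y₀ - y) / y₀ = (p + q * y) / p := by
  subst hy₀
  field_simp
  ring

lemma one_sub_div_div_div {b c y p q α β : F} (hb : b ≠ 0) (hc : c ≠ 0) (hp : p ≠ 0)
    (hβ : β ≠ 0) :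
    1 - q / (b * c * p) / (β / (b * y * α)) = (c * p * β - y * q * α) / (c * p * β) := by
  field_simp

lemma cross_difference_factor (a b c y : F) :
    c * (a * c - a + 1) * (b * y - y + 1) - y * (b * c - c + 1) * (a * y - a + 1)
      = (c - y) * (a * c - a + 1 + a * (b * c - c + 1) * y) := by
  ring

end

theorem stmt16 {F : Type*} [Field F] (a b c : F) (A B k l l₁ l₂ : F → F)
    (hA : ∀ t, A t = (a * t - a + 1) / a)
    (hB : ∀ t, B t = b * t - t + 1)
    (hk : ∀ t, k t = B t / (a * b * t * A t))
    (hl : ∀ t, l t = 1 - k c / k t)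
    (hl1 : ∀ t, l₁ t = 1 - t / c)
    (hl2 : ∀ t, l₂ t = (-(a * c - a + 1) / (a * (b * c - c + 1)) - t)
        / ((-(a * c - a + 1) / (a * (b * c - c + 1))) * B t))
    (ha : a ≠ 0) (hb : b ≠ 0) (hc : c ≠ 0)
    (hBc : b * c - c + 1 ≠ 0) (hAc : a * c - a + 1 ≠ 0) :
    (∀ y, y ≠ 0 → A y ≠ 0 → B y ≠ 0 → l₁ y * l₂ y = l y)
    ∧ l₁ 0 = 1 ∧ l₂ 0 = 1 := by
  set y₂ := -(a * c - a + 1) / (a * (b * c - c + 1)) with hy₂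
  have hy₂_ne : y₂ ≠ 0 := div_ne_zero (neg_ne_zero.mpr hAc) (mul_ne_zero ha hBc)
  have hk' (t : F) : k t = B t / (b * t * (a * t - a + 1)) := by
    rw [hk, hA]
    congr 1
    field_simp
  refine ⟨fun y _ _ hBy => ?_, by simp [hl1], by simp [hl2, hB, hy₂_ne]⟩
  calc l₁ y * l₂ y = (c - y) / c * ((y₂ - y) / y₂ / B y) := by
        rw [hl1, hl2, one_sub_div hc, div_div, mul_comm y₂]
    _ = (c - y) * (a * c - a + 1 + a * (b * c - c + 1) * y) / (c * (a * c - a + 1) * B y) := by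
        rw [sub_div_self_of_eq_neg_div hy₂ hAc (mul_ne_zero ha hBc)]
        field_simp
    _ = l y := by
        rw [hl, hk', hk', one_sub_div_div_div hb hc hAc hBy, hB, hB, cross_difference_factor]
end
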